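/- Let J, K : ℝ → ℝⁿ be differentiable functions, and define the vector fields X_J, X_K : ℝ × ℝ × ℝⁿ → ℝ × ℝ × ℝⁿ by X_J(u,v,x) = ( 0, ⟨x, J'(u)⟩, J(u) ) and X_K(u,v,x) = ( 0, ⟨x, K'(u)⟩, K(u) ). Then the Lie bracket of vector fields satisfies [X_J, X_K](u,v,x) = ( 0, ⟨J(u), K'(u)⟩ − ⟨K(u), J'(u)⟩, 0 ) for all (u,v,x); that is, [X_J, X_K] = ω(J,K)(u)·∂ᵥ where ω(J,K)(u) = ⟨J(u), K'(u)⟩ − ⟨K(u), J'(u)⟩. -/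

import Mathlib

open Matrix

/-- The infinitesimal Heisenberg symmetry `X_J(u,v,x) = (0, ⟨x, J'(u)⟩, J(u))` of a
Brinkmann plane wave, where `dJ` denotes the derivative `J'`. -/
def heisVF {n : ℕ} (J dJ : ℝ → (Fin n → ℝ)) :
    ℝ × ℝ × (Fin n → ℝ) → ℝ × ℝ × (Fin n → ℝ) :=
  fun q => (0, q.2.2 ⬝ᵥ dJ q.1, J q.1)

/-! The fields have zero `u`-component, so the bracket only differentiates them in the `(v, x)`
directions. There `X_K` varies only through its term `⟨x, K'(u)⟩`, which is linear in `x`, so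
`DX_K(q)(X_J(q)) = (0, ⟨J(u), K'(u)⟩, 0)`; the second derivatives `J''`, `K''` drop out. -/

section DotProduct

variable {𝕜 : Type*} [NontriviallyNormedField 𝕜] [CompleteSpace 𝕜] {ι : Type*} [Fintype ι]
  {E : Type*} [NormedAddCommGroup E] [NormedSpace 𝕜 E]

variable (𝕜 ι) in
noncomputable def dotProductL : (ι → 𝕜) →L[𝕜] (ι → 𝕜) →L[𝕜] 𝕜 :=
  (dotProductBilin 𝕜 𝕜).toContinuousBilinearMap

@[simp]
lemma dotProductL_apply (v w : ι → 𝕜) : dotProductL 𝕜 ι v w = v ⬝ᵥ w := rfl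

theorem HasFDerivAt.dotProduct {f g : E → ι → 𝕜} {f' g' : E →L[𝕜] ι → 𝕜} {x : E}
    (hf : HasFDerivAt f f' x) (hg : HasFDerivAt g g' x) :
    HasFDerivAt (fun y => f y ⬝ᵥ g y)
      ((dotProductL 𝕜 ι).precompR E (f x) g' + (dotProductL 𝕜 ι).precompL E f' (g x)) x :=
  (dotProductL 𝕜 ι).hasFDerivAt_of_bilinear hf hg

end DotProduct

theorem fderiv_heisVF_apply {n : ℕ} {J dJ : ℝ → Fin n → ℝ} {q : ℝ × ℝ × (Fin n → ℝ)}
    {v a : Fin n → ℝ} (hJ : HasDerivAt J v q.1) (hdJ : HasDerivAt dJ a q.1)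
    (w : ℝ × ℝ × (Fin n → ℝ)) :
    fderiv ℝ (heisVF J dJ) q w = (0, w.1 * (q.2.2 ⬝ᵥ a) + w.2.2 ⬝ᵥ dJ q.1, w.1 • v) := by
  have hu : HasFDerivAt Prod.fst _ q := hasFDerivAt_fst (𝕜 := ℝ)
  have hx : HasFDerivAt (fun p => p.2.2) _ q := hasFDerivAt_snd.snd (𝕜 := ℝ)
  have H : HasFDerivAt (heisVF J dJ) _ q := (hasFDerivAt_const (0 : ℝ) q).prodMk
    ((hx.dotProduct (hdJ.hasFDerivAt.comp q hu)).prodMk (hJ.hasFDerivAt.comp q hu))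
  rw [H.fderiv]
  simp

theorem heisenberg_bracket {n : ℕ} (J dJ ddJ K dK ddK : ℝ → (Fin n → ℝ))
    (hJ : ∀ u, HasDerivAt J (dJ u) u)
    (hdJ : ∀ u, HasDerivAt dJ (ddJ u) u)
    (hK : ∀ u, HasDerivAt K (dK u) u)
    (hdK : ∀ u, HasDerivAt dK (ddK u) u) :
    ∀ q : ℝ × ℝ × (Fin n → ℝ),
      fderiv ℝ (heisVF K dK) q (heisVF J dJ q) - fderiv ℝ (heisVF J dJ) q (heisVF K dK q)
        = ((0 : ℝ), J q.1 ⬝ᵥ dK q.1 - K q.1 ⬝ᵥ dJ q.1, (0 : Fin n → ℝ)) := by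
  intro q
  rw [fderiv_heisVF_apply (hK q.1) (hdK q.1), fderiv_heisVF_apply (hJ q.1) (hdJ q.1)]
  simp [heisVF]
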